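/- For integers α, β with α < 0 and β ≥ 0, the generalized Jacobi polynomial J_N^{α,β}(x) = (1-x)^{-α} P_{N+α}^{-α,β}(x) attains its maximum absolute value over [-1,1] at x = -1, and ‖J_N^{α,β}‖_{L^∞[-1,1]} = 2^{|α|}·C(ñ+β, ñ) where ñ = N+α and C denotes the binomial coefficient. -/

import Mathlib

open Finset in
/-- The classical Jacobi polynomial `P_n^{a,b}` with nonnegative integer parameters,
normalized so that `P_n^{a,b}(1) = C(n+a,n)`. -/
noncomputable def jacobiP (n a b : ℕ) (x : ℝ) : ℝ :=
  ∑ s ∈ Finset.range (n + 1),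
    (Nat.choose (n + a) (n - s) : ℝ) * (Nat.choose (n + b) s : ℝ) *
      ((x - 1) / 2) ^ s * ((x + 1) / 2) ^ (n - s)

/-!
With `n = N - a`, the polynomial `y = 2ⁿ (1 - x)^a P_n^{a,b}` solves the Jacobi equation
`(1 - x²) y'' + (β - α - (α + β + 2) x) y' + λ y = 0` for `α = -a`, `β = b`, `λ = N (n + b + 1)`.
For any solution, Sonin's function `F = y² + (1 - x²) y'² / λ` has derivative
`-(2 / λ) (β - α - (α + β + 1) x) y'²`, which is `≤ 0` on `[-1, 1]` when `α ≤ -1/2 ≤ β`.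
Hence `y(x)² ≤ F(x) ≤ F(-1) = y(-1)²`.

The equation is checked on the expansion of `y` in the products `(1 - x)^p (1 + x)^q`: after
multiplication by `1 - x²` the operator sends such a product to a combination of its two
neighbours `(1 - x)^(p+1) (1 + x)^q` and `(1 - x)^p (1 + x)^(q+1)`, and these contributions cancel
in pairs thanks to the binomial recurrence of the coefficients.
-/

open Polynomial Finset

noncomputable def endpointMonomial (p q : ℕ) : ℝ[X] := (1 - X) ^ p * (1 + X) ^ q

noncomputable def jacobiOperator (α β ℓ : ℝ) : ℝ[X] →ₗ[ℝ] ℝ[X] :=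
  LinearMap.mulLeft ℝ (1 - X ^ 2) ∘ₗ derivative ∘ₗ derivative
    + LinearMap.mulLeft ℝ (C β - C α - (C α + C β + 2) * X) ∘ₗ derivative + ℓ • LinearMap.id

theorem jacobiOperator_apply (α β ℓ : ℝ) (P : ℝ[X]) :
    jacobiOperator α β ℓ P = (1 - X ^ 2) * derivative (derivative P)
      + (C β - C α - (C α + C β + 2) * X) * derivative P + C ℓ * P := by
  simp [jacobiOperator, smul_eq_C_mul]

-- Multiplying by `(1 - X) (1 + X)` avoids the truncated exponents `p - 1` and `q - 1`.
theorem mul_derivative_endpointMonomial (p q : ℕ) :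
    (1 - X) * (1 + X) * derivative (endpointMonomial p q) =
      ((q : ℝ[X]) * (1 - X) - (p : ℝ[X]) * (1 + X)) * endpointMonomial p q := by
  rcases p with _ | p <;> rcases q with _ | q <;>
    simp [endpointMonomial, derivative_mul, derivative_pow_succ] <;> ring

theorem one_sub_sq_mul_jacobiOperator_endpointMonomial {α β ℓ : ℝ} (p q : ℕ)
    (hℓ : ℓ = (p + q) * (p + q + α + β + 1)) :
    (1 - X ^ 2) * jacobiOperator α β ℓ (endpointMonomial p q) =
      (2 * q * (q + β)) • endpointMonomial (p + 1) q
        + (2 * p * (p + α)) • endpointMonomial p (q + 1) := by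
  have h1 := mul_derivative_endpointMonomial p q
  have h2 := congrArg derivative h1
  simp only [derivative_mul, derivative_sub, derivative_add, derivative_one, derivative_X,
    derivative_natCast] at h2
  rw [jacobiOperator_apply, hℓ]
  simp only [smul_eq_C_mul, map_mul, map_add, map_natCast, map_ofNat, map_one]
  simp only [endpointMonomial] at *
  linear_combination (1 - X ^ 2) * h2
    + (C β - C α - (C α + C β + 2) * X + 2 * X + (q * (1 - X) - p * (1 + X))) * h1

theorem sum_range_succ_add_eq_zero {M : Type*} [AddCommMonoid M] {f g : ℕ → M} {n : ℕ}
    (hf : f n = 0) (hg : g 0 = 0) (h : ∀ i < n, f i + g (i + 1) = 0) :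
    ∑ i ∈ range (n + 1), (f i + g i) = 0 := by
  rw [sum_add_distrib, sum_range_succ, sum_range_succ', hf, hg, add_zero, add_zero,
    ← sum_add_distrib]
  exact sum_eq_zero fun i hi => h i (mem_range.mp hi)

noncomputable def jacobiCoeff (n a b s : ℕ) : ℝ :=
  (-1) ^ s * (n + a).choose (n - s) * (n + b).choose s

theorem jacobiCoeff_mul_add_jacobiCoeff_succ_mul {n s : ℕ} (a b : ℕ) (hs : s < n) :
    jacobiCoeff n a b s * ((n - s : ℕ) * ((n - s : ℕ) + b))
      + jacobiCoeff n a b (s + 1) * ((a + s + 1) * (s + 1)) = 0 := by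
  obtain ⟨j, rfl⟩ : ∃ j, n = s + 1 + j := ⟨n - (s + 1), by omega⟩
  have hA : ((s + 1 + j + a).choose (j + 1) : ℝ) * (j + 1)
      = (s + 1 + j + a).choose j * (a + s + 1) := by
    have := Nat.choose_succ_right_eq (s + 1 + j + a) j
    rw [show s + 1 + j + a - j = a + s + 1 by omega] at this
    exact_mod_cast this
  have hB : ((s + 1 + j + b).choose (s + 1) : ℝ) * (s + 1)
      = (s + 1 + j + b).choose s * (j + 1 + b) := by
    have := Nat.choose_succ_right_eq (s + 1 + j + b) s
    rw [show s + 1 + j + b - s = j + 1 + b by omega] at this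
    exact_mod_cast this
  simp only [jacobiCoeff, pow_succ]
  rw [show s + 1 + j - s = j + 1 by omega, show s + 1 + j - (s + 1) = j by omega]
  push_cast
  linear_combination (-1) ^ s * ((s + 1 + j + b).choose s * (j + 1 + b) * hA
    - (s + 1 + j + a).choose j * (a + s + 1) * hB)

noncomputable def scaledGenJacobi (n a b : ℕ) : ℝ[X] :=
  ∑ s ∈ range (n + 1), jacobiCoeff n a b s • endpointMonomial (a + s) (n - s)

theorem eval_scaledGenJacobi (n a b : ℕ) (x : ℝ) :
    (scaledGenJacobi n a b).eval x = 2 ^ n * ((1 - x) ^ a * jacobiP n a b x) := by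
  simp only [scaledGenJacobi, jacobiP, eval_finsetSum, eval_smul, endpointMonomial, eval_mul,
    eval_pow, eval_sub, eval_add, eval_one, eval_X, smul_eq_mul, mul_sum]
  refine sum_congr rfl fun s hs => ?_
  obtain ⟨t, rfl⟩ : ∃ t, n = s + t := ⟨n - s, by have := mem_range.mp hs; omega⟩
  rw [Nat.add_sub_cancel_left, ← neg_sub 1 x, neg_div, neg_pow, div_pow, div_pow, pow_add 2,
    jacobiCoeff, Nat.add_sub_cancel_left]
  field_simp
  ring

theorem jacobiOperator_scaledGenJacobi (n a b : ℕ) :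
    jacobiOperator (-a) b ((n + a) * (n + b + 1)) (scaledGenJacobi n a b) = 0 := by
  have hU : (1 - X ^ 2 : ℝ[X]) ≠ 0 := fun h => by simpa using congrArg (eval 0) h
  refine (mul_eq_zero.mp ?_).resolve_left hU
  set f : ℕ → ℝ[X] := fun s => (jacobiCoeff n a b s * ((n - s : ℕ) * ((n - s : ℕ) + b))) •
    endpointMonomial (a + s + 1) (n - s)
  set g : ℕ → ℝ[X] := fun s => (jacobiCoeff n a b s * ((a + s) * s)) •
    endpointMonomial (a + s) (n - s + 1)
  have hterm : ∀ s ∈ range (n + 1), (1 - X ^ 2) * jacobiOperator (-a) b ((n + a) * (n + b + 1))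
      (jacobiCoeff n a b s • endpointMonomial (a + s) (n - s)) = (2 : ℝ) • (f s + g s) := by
    intro s hs
    have hsn : s ≤ n := Nat.lt_succ_iff.mp (mem_range.mp hs)
    rw [map_smul, mul_smul_comm, one_sub_sq_mul_jacobiOperator_endpointMonomial (a + s) (n - s)
      (by push_cast [hsn]; ring)]
    simp only [f, g]
    push_cast [hsn]
    module
  rw [scaledGenJacobi, map_sum, mul_sum, sum_congr rfl hterm, ← smul_sum,
    sum_range_succ_add_eq_zero (by simp [f]) (by simp [g]), smul_zero]
  intro i hi
  simp only [f, g]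
  rw [show a + (i + 1) = a + i + 1 by omega, show n - (i + 1) + 1 = n - i by omega, ← add_smul]
  push_cast
  rw [← add_assoc, jacobiCoeff_mul_add_jacobiCoeff_succ_mul a b hi, zero_smul]

theorem abs_eval_le_abs_eval_neg_one_of_jacobiOperator_eq_zero {α β ℓ : ℝ} (hα : α ≤ -1 / 2)
    (hβ : -1 / 2 ≤ β) (hℓ : 0 < ℓ) {P : ℝ[X]} (hP : jacobiOperator α β ℓ P = 0) {x : ℝ}
    (hx : x ∈ Set.Icc (-1) 1) : |P.eval x| ≤ |P.eval (-1)| := by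
  set P' := derivative P
  have hode (y : ℝ) : (1 - y ^ 2) * P'.derivative.eval y
      + (β - α - (α + β + 2) * y) * P'.eval y + ℓ * P.eval y = 0 := by
    simpa [jacobiOperator_apply] using congrArg (eval y) hP
  let F : ℝ → ℝ := fun y => P.eval y ^ 2 + (1 - y ^ 2) * P'.eval y ^ 2 / ℓ
  have hF (y : ℝ) : HasDerivAt F (-(2 / ℓ) * (β - α - (α + β + 1) * y) * P'.eval y ^ 2) y := by
    refine (((P.hasDerivAt y).fun_pow 2).fun_add (((hasDerivAt_pow 2 y).const_sub 1).fun_mul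
      ((P'.hasDerivAt y).fun_pow 2) |>.div_const ℓ)).congr_deriv ?_
    field_simp
    linear_combination 2 * P'.eval y * hode y
  have hF_nonpos {y : ℝ} (hy : y ∈ Set.Icc (-1 : ℝ) 1) :
      -(2 / ℓ) * (β - α - (α + β + 1) * y) * P'.eval y ^ 2 ≤ 0 := by
    have : 0 ≤ β - α - (α + β + 1) * y := by nlinarith [hy.1, hy.2]
    simp only [neg_mul, neg_nonpos]
    exact mul_nonneg (mul_nonneg (by positivity) this) (sq_nonneg _)
  have hanti : AntitoneOn F (Set.Icc (-1) 1) :=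
    antitoneOn_of_hasDerivWithinAt_nonpos (convex_Icc _ _)
      (fun y _ => (hF y).continuousAt.continuousWithinAt) (fun y _ => (hF y).hasDerivWithinAt)
      (fun y hy => hF_nonpos (interior_subset hy))
  rw [← sq_le_sq]
  calc P.eval x ^ 2 ≤ F x := le_add_of_nonneg_right <|
        div_nonneg (mul_nonneg (by nlinarith [hx.1, hx.2]) (sq_nonneg _)) hℓ.le
    _ ≤ F (-1) := hanti ⟨le_rfl, by norm_num⟩ hx hx.1
    _ = P.eval (-1) ^ 2 := by simp [F]

theorem jacobiP_neg_one (n a b : ℕ) : jacobiP n a b (-1) = (-1) ^ n * (n + b).choose n := by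
  rw [jacobiP, sum_eq_single_of_mem n (self_mem_range_succ n)]
  · simp only [Nat.sub_self, pow_zero, mul_one]
    norm_num
    ring
  · intro s hs hsn
    have : n - s ≠ 0 := by have := mem_range.mp hs; omega
    simp [this]

theorem genJacobi_max_at_neg_one_general (a b N : ℕ) (ha : 1 ≤ a) :
    IsGreatest ((fun x : ℝ => |(1 - x) ^ a * jacobiP (N - a) a b x|) '' Set.Icc (-1 : ℝ) 1)
      (|(1 - (-1 : ℝ)) ^ a * jacobiP (N - a) a b (-1)|) ∧
    |(1 - (-1 : ℝ)) ^ a * jacobiP (N - a) a b (-1)| =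
      2 ^ a * (Nat.choose (N - a + b) (N - a) : ℝ) := by
  set n := N - a
  have ha' : (1 : ℝ) ≤ a := by exact_mod_cast ha
  have hbound {x : ℝ} (hx : x ∈ Set.Icc (-1 : ℝ) 1) :
      |(1 - x) ^ a * jacobiP n a b x| ≤ |(1 - (-1 : ℝ)) ^ a * jacobiP n a b (-1)| := by
    have hℓ : (0 : ℝ) < (n + a) * (n + b + 1) := by positivity
    have h := abs_eval_le_abs_eval_neg_one_of_jacobiOperator_eq_zero (by linarith)
      (by linarith [b.cast_nonneg (α := ℝ)]) hℓ (jacobiOperator_scaledGenJacobi n a b) hx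
    rwa [eval_scaledGenJacobi, eval_scaledGenJacobi, abs_mul (2 ^ n), abs_mul (2 ^ n),
      mul_le_mul_iff_right₀ (by positivity)] at h
  refine ⟨⟨⟨-1, by norm_num, rfl⟩, ?_⟩, ?_⟩
  · rintro _ ⟨x, hx, rfl⟩
    exact hbound hx
  · norm_num [jacobiP_neg_one, abs_mul]

/-- For integers `α < 0 ≤ β` (here `α = -a` with `a ≥ 1`, `β = b`), the generalized
Jacobi polynomial `J_N^{α,β}(x) = (1-x)^a P_{N-a}^{a,b}(x)` attains its maximal absolute
value on `[-1,1]` at `x = -1`, with value `2^a · C(N-a+b, N-a)`. -/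
theorem genJacobi_max_at_neg_one (a b N : ℕ) (ha : 1 ≤ a) (hN : a ≤ N) :
    IsGreatest ((fun x : ℝ => |(1 - x) ^ a * jacobiP (N - a) a b x|) '' Set.Icc (-1 : ℝ) 1)
      (|(1 - (-1 : ℝ)) ^ a * jacobiP (N - a) a b (-1)|) ∧
    |(1 - (-1 : ℝ)) ^ a * jacobiP (N - a) a b (-1)| =
      2 ^ a * (Nat.choose (N - a + b) (N - a) : ℝ) :=
  genJacobi_max_at_neg_one_general a b N ha
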